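/- arXiv:1509.01545 — 3 statements merged into one kernel-verified Lean document; each statement's English description precedes it below -/
import Mathlib

section
/- If f : ℕ → ℕ ∪ {⊥} is the partially defined function with f(3n) = 2n-1 for n ≥ 1, f(3n-1) = 2n for n ≥ 2, and f undefined (⊥) otherwise, then for every k ≥ 0 the natural density of the set of n such that n, f(n), f²(n), …, f^k(n) are all defined (avoid ⊥) equals (2/3)^{k+1}. -/
/-- The partially defined map `f(3n) = 2n - 1` (for `n ≥ 1`), `f(3n-1) = 2n` (for `n ≥ 2`),
undefined otherwise. -/
def hilf (m : ℕ) : Option ℕ :=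
  if m % 3 = 0 ∧ 3 ≤ m then some (2 * (m / 3) - 1)
  else if m % 3 = 2 ∧ 5 ≤ m then some (2 * ((m + 1) / 3))
  else none

open Finset Filter Topology

/-!
The map `hilf` is a bijection from its domain onto `{m ≥ 1, m ≠ 2}`, with inverse
`2t - 1 ↦ 3t`, `2t ↦ 3t - 1`. It therefore carries the points of its domain in `[1, x]` onto
`[1, 2⌊x/3⌋]` up to one element at either end, so the number `c_k(x)` of `n ≤ x` whose first `k`
iterates are defined satisfies `|c_{k+1}(x) - c_k(2⌊x/3⌋)| ≤ 1`. By induction,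
`|c_k(x) - (2/3)^k x| ≤ 3k`, and dividing by `x` gives the density.
-/

section PartialIterate

variable {α : Type*} (f : α → Option α)

theorem iterate_bind_none (j : ℕ) : (fun o : Option α => o.bind f)^[j] none = none :=
  Function.iterate_fixed rfl j

theorem isSome_iterate_bind_succ (j : ℕ) (a : α) :
    ((fun o : Option α => o.bind f)^[j + 1] (some a)).isSome ↔
      ∃ b, f a = some b ∧ ((fun o : Option α => o.bind f)^[j] (some b)).isSome := by
  rw [Function.iterate_succ_apply]
  change ((fun o : Option α => o.bind f)^[j] (f a)).isSome ↔ _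
  cases f a <;> simp [iterate_bind_none]

end PartialIterate

theorem card_filter_le_of_subset_insert {α : Type*} [DecidableEq α] {s t : Finset α} {a : α}
    (h : s ⊆ insert a t) (p : α → Prop) [DecidablePred p] :
    #(s.filter p) ≤ #(t.filter p) + 1 :=
  calc #(s.filter p) ≤ #(insert a (t.filter p)) := card_le_card fun x hx => by
        have := h (mem_filter.1 hx).1
        grind
    _ ≤ #(t.filter p) + 1 := card_insert_le a _

theorem tendsto_div_of_abs_sub_mul_le {u : ℕ → ℝ} {L C : ℝ} (h : ∀ x : ℕ, |u x - L * x| ≤ C) :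
    Tendsto (fun x : ℕ => u x / x) atTop (𝓝 L) := by
  have hC : Tendsto (fun x : ℕ => C / x) atTop (𝓝 0) := tendsto_const_div_atTop_nhds_zero_nat C
  rw [← tendsto_sub_nhds_zero_iff]
  refine squeeze_zero_norm' ?_ hC
  filter_upwards [eventually_gt_atTop 0] with x hx
  have hx : (0 : ℝ) < x := by exact_mod_cast hx
  rw [Real.norm_eq_abs, show u x / x - L = (u x - L * x) / x by field_simp, abs_div,
    abs_of_pos hx]
  exact div_le_div_of_nonneg_right (h x) hx.le

def hilfInv (m : ℕ) : ℕ := if Even m then 3 * m / 2 - 1 else 3 * (m + 1) / 2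

theorem hilfInv_injective : Function.Injective hilfInv := by
  intro m m' h
  simp only [hilfInv, Nat.even_iff] at h
  split_ifs at h <;> omega

theorem hilf_eq_some_iff {n m : ℕ} : hilf n = some m ↔ 1 ≤ m ∧ m ≠ 2 ∧ hilfInv m = n := by
  simp only [hilf, hilfInv, Nat.even_iff]
  split_ifs <;> simp <;> omega

theorem le_hilfInv (m : ℕ) : m ≤ hilfInv m := by
  simp only [hilfInv, Nat.even_iff]
  split_ifs <;> omega

theorem hilfInv_le_of_le {m x : ℕ} (hmx : m ≤ 2 * (x / 3)) : hilfInv m ≤ x := by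
  simp only [hilfInv, Nat.even_iff]
  split_ifs <;> omega

theorem le_or_eq_of_hilfInv_le {m x : ℕ} (hmx : hilfInv m ≤ x) :
    m ≤ 2 * (x / 3) ∨ m = 2 * (x / 3) + 2 := by
  simp only [hilfInv, Nat.even_iff] at hmx
  split_ifs at hmx <;> omega

abbrev IterDefined (j n : ℕ) : Prop := ((fun o : Option ℕ => o.bind hilf)^[j] (some n)).isSome

def iterDefinedCount (j x : ℕ) : ℕ := #{n ∈ Icc 1 x | IterDefined j n}

theorem iterDefinedCount_succ (j x : ℕ) :
    iterDefinedCount (j + 1) x =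
      #(((Icc 1 x).filter fun m => m ≠ 2 ∧ hilfInv m ≤ x).filter (IterDefined j)) := by
  rw [iterDefinedCount]
  conv_rhs => rw [← card_image_of_injective _ hilfInv_injective]
  congr 1
  ext n
  simp only [mem_filter, mem_Icc, mem_image, IterDefined, isSome_iterate_bind_succ,
    hilf_eq_some_iff]
  constructor
  · rintro ⟨⟨h1, hx⟩, m, ⟨hm1, hm2, rfl⟩, hm⟩
    exact ⟨m, ⟨⟨⟨hm1, (le_hilfInv m).trans hx⟩, hm2, hx⟩, hm⟩, rfl⟩
  · rintro ⟨m, ⟨⟨⟨hm1, -⟩, hm2, hx⟩, hm⟩, rfl⟩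
    exact ⟨⟨hm1.trans (le_hilfInv m), hx⟩, m, ⟨hm1, hm2, rfl⟩, hm⟩

theorem iterDefinedCount_succ_le (j x : ℕ) :
    iterDefinedCount (j + 1) x ≤ iterDefinedCount j (2 * (x / 3)) + 1 := by
  rw [iterDefinedCount_succ, iterDefinedCount]
  refine card_filter_le_of_subset_insert (a := 2 * (x / 3) + 2) (p := IterDefined j)
    fun m hm => ?_
  have := le_or_eq_of_hilfInv_le (mem_filter.1 hm).2.2
  simp only [mem_filter, mem_Icc, mem_insert] at hm ⊢
  omega

theorem le_iterDefinedCount_succ (j x : ℕ) :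
    iterDefinedCount j (2 * (x / 3)) ≤ iterDefinedCount (j + 1) x + 1 := by
  rw [iterDefinedCount_succ, iterDefinedCount]
  refine card_filter_le_of_subset_insert (a := 2) (p := IterDefined j) fun m hm => ?_
  simp only [mem_filter, mem_Icc, mem_insert] at hm ⊢
  by_cases hm2 : m = 2
  · exact .inl hm2
  · exact .inr ⟨⟨hm.1, by omega⟩, hm2, hilfInv_le_of_le hm.2⟩

theorem abs_iterDefinedCount_sub_le (j x : ℕ) :
    |(iterDefinedCount j x : ℝ) - (2 / 3) ^ j * x| ≤ 3 * j := by
  induction j generalizing x with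
  | zero => simp [iterDefinedCount, IterDefined]
  | succ j ih =>
    set y := 2 * (x / 3)
    have hstep : |(iterDefinedCount (j + 1) x : ℝ) - iterDefinedCount j y| ≤ 1 := by
      have h₁ : (iterDefinedCount (j + 1) x : ℝ) ≤ iterDefinedCount j y + 1 := by
        exact_mod_cast iterDefinedCount_succ_le j x
      have h₂ : (iterDefinedCount j y : ℝ) ≤ iterDefinedCount (j + 1) x + 1 := by
        exact_mod_cast le_iterDefinedCount_succ j x
      exact abs_sub_le_iff.2 ⟨by linarith, by linarith⟩
    have hy : |(y : ℝ) - 2 / 3 * x| ≤ 2 := by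
      have hx : (x : ℝ) = 3 * (x / 3 : ℕ) + (x % 3 : ℕ) := by
        exact_mod_cast (Nat.div_add_mod x 3).symm
      have hmod : ((x % 3 : ℕ) : ℝ) < 3 := by exact_mod_cast Nat.mod_lt x three_pos
      simp only [y, Nat.cast_mul, Nat.cast_ofNat, hx]
      exact abs_sub_le_iff.2 ⟨by linarith [(x % 3 : ℕ).cast_nonneg (α := ℝ)], by linarith⟩
    have hpow : |((2 : ℝ) / 3) ^ j| ≤ 1 := by
      rw [abs_of_nonneg (by positivity)]
      exact pow_le_one₀ (by norm_num) (by norm_num)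
    calc |(iterDefinedCount (j + 1) x : ℝ) - (2 / 3) ^ (j + 1) * x|
        ≤ |(iterDefinedCount (j + 1) x : ℝ) - iterDefinedCount j y|
            + |(iterDefinedCount j y : ℝ) - (2 / 3) ^ j * y|
            + |(2 / 3 : ℝ) ^ j| * |(y : ℝ) - 2 / 3 * x| := by
          rw [← abs_mul, mul_sub, ← mul_assoc, ← pow_succ, add_assoc]
          exact (abs_sub_le _ _ _).trans (add_le_add_right (abs_sub_le _ _ _) _)
      _ ≤ 1 + 3 * j + 1 * 2 := by gcongr; exact ih y
      _ ≤ 3 * ↑(j + 1) := by push_cast; linarith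

theorem stmt4 (k : ℕ) :
    Filter.Tendsto
      (fun x : ℕ =>
        (((Finset.Icc 1 x).filter
            (fun n => (((fun o : Option ℕ => o.bind hilf)^[k + 1]) (some n)).isSome)).card : ℝ) / x)
      Filter.atTop (nhds ((2 / 3 : ℝ) ^ (k + 1))) :=
  tendsto_div_of_abs_sub_mul_le (abs_iterDefinedCount_sub_le (k + 1))
end

section
/- The set of natural numbers n such that both n and n+1 are squarefree has natural density c = ∏_p (1 - 2/p²), where the product runs over all primes p. -/
/-!
Sieve by the primes `p ≤ y`. The condition "`p² ∤ n` and `p² ∤ n + 1` for all `p ≤ y`" is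
periodic modulo `∏ p²`, and by the Chinese remainder theorem it holds for exactly `∏ (p² - 2)`
residues, so its density is `∏_{p ≤ y} (1 - 2 / p²)`. An `n ≤ x` that passes this sieve without
`n, n + 1` both being squarefree has `d² ∣ n` or `d² ∣ n + 1` for some `y < d ≤ x + 1`, which
happens for at most `∑_{d > y} 2 (x + 1) / d² ≤ 4 (x + 1) / (y + 1)` values of `n`. Letting
`y → ∞`, the partial products converge to the Euler product.
-/

open scoped Classical

open Finset Filter Topology Function

namespace Nat

variable {p : ℕ → Prop} [DecidablePred p] {a : ℕ}

theorem count_add_of_periodic (hp : Periodic p a) (n : ℕ) :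
    count p (a + n) = count p a + count p n := by
  rw [count_add]
  congr 2
  funext k
  rw [add_comm, hp k]

theorem count_mul_add_of_periodic (hp : Periodic p a) (q r : ℕ) :
    count p (q * a + r) = q * count p a + count p r := by
  induction q with
  | zero => simp
  | succ q ih => rw [add_mul, one_mul, add_comm _ a, add_assoc, count_add_of_periodic hp, ih]; ring

theorem abs_count_sub_le_of_periodic (hp : Periodic p a) (ha : 0 < a) (n : ℕ) :
    |(count p n : ℝ) - n * count p a / a| ≤ a := by
  obtain ⟨q, r, hr, rfl⟩ : ∃ q r, r < a ∧ n = q * a + r :=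
    ⟨n / a, n % a, mod_lt n ha, (div_add_mod' n a).symm⟩
  have hrem : (count p r : ℝ) ≤ r := by exact_mod_cast count_le p
  have hr' : (r : ℝ) < a := by exact_mod_cast hr
  have ha' : (0 : ℝ) < a := by exact_mod_cast ha
  have hsplit : ((q * a + r : ℕ) : ℝ) * count p a / a = q * count p a + r * (count p a / a) := by
    push_cast; field_simp
  have hfrac : (r : ℝ) * (count p a / a) ≤ r :=
    mul_le_of_le_one_right r.cast_nonneg ((div_le_one ha').mpr (by exact_mod_cast count_le p))
  have hfrac' : 0 ≤ (r : ℝ) * (count p a / a) := by positivity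
  rw [count_mul_add_of_periodic hp, hsplit, abs_le]
  push_cast
  constructor <;> linarith [(count p r).cast_nonneg (α := ℝ)]

theorem tendsto_count_div_of_periodic (hp : Periodic p a) (ha : 0 < a) :
    Tendsto (fun n : ℕ => (count p n : ℝ) / n) atTop (𝓝 (count p a / a)) := by
  have herr : Tendsto (fun n : ℕ => ((count p n : ℝ) - n * count p a / a) / n) atTop (𝓝 0) := by
    refine squeeze_zero_norm (fun n => ?_) (tendsto_const_div_atTop_nhds_zero_nat (a : ℝ))
    rw [norm_div, Real.norm_natCast]
    exact div_le_div_of_nonneg_right (abs_count_sub_le_of_periodic hp ha n) n.cast_nonneg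
  refine (zero_add ((count p a : ℝ) / a) ▸ herr.add_const _).congr' ?_
  filter_upwards [eventually_ne_atTop 0] with n hn
  field_simp
  ring

theorem card_filter_Icc_one_eq_count (x : ℕ) :
    #{n ∈ Icc 1 x | p n} = count (fun k => p (k + 1)) x := by
  rw [count_eq_card_filter_range]
  refine card_nbij' (· - 1) (· + 1) ?_ ?_ ?_ ?_ <;> intro n hn <;> simp_all; omega

theorem tendsto_card_filter_Icc_div_of_periodic (hp : Periodic p a) (ha : 0 < a) :
    Tendsto (fun x : ℕ => (#{n ∈ Icc 1 x | p n} : ℝ) / x) atTop (𝓝 (count p a / a)) := by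
  have hp' : Periodic (fun k => p (k + 1)) a := fun k => by
    simp only [add_right_comm k a, hp (k + 1)]
  have hcount : count (fun k => p (k + 1)) a = count p a := by
    rw [← card_filter_Icc_one_eq_count, ← filter_Ico_card_eq_of_periodic 1 a p hp, add_comm,
      Ico_add_one_right_eq_Icc]
  simpa only [card_filter_Icc_one_eq_count, hcount] using tendsto_count_div_of_periodic hp' ha

theorem count_and_mul_of_coprime {m n : ℕ} (hmn : m.Coprime n) {q : ℕ → Prop} [DecidablePred q]
    (hp : Periodic p m) (hq : Periodic q n) :
    count (fun k => p k ∧ q k) (m * n) = count p m * count q n := by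
  rcases m.eq_zero_or_pos with rfl | hm
  · simp
  rcases n.eq_zero_or_pos with rfl | hn
  · simp
  let crt (a b : ℕ) : ℕ := chineseRemainder hmn a b % (m * n)
  have hcrt (a b : ℕ) : crt a b % m = a % m ∧ crt a b % n = b % n :=
    ⟨(mod_mul_right_mod _ _ _).trans (chineseRemainder hmn a b).2.1,
      (mod_mul_left_mod _ _ _).trans (chineseRemainder hmn a b).2.2⟩
  simp only [count_eq_card_filter_range, ← card_product]
  refine card_nbij' (fun k => (k % m, k % n)) (fun ab => crt ab.1 ab.2) ?_ ?_ ?_ ?_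
  · intro k hk
    simp_all [hp.map_mod_nat, hq.map_mod_nat, mod_lt]
  · rintro ⟨a, b⟩ hab
    simp_all only [coe_filter, coe_product, Set.mem_prod, Set.mem_ofPred_eq, mem_range]
    refine ⟨mod_lt _ (mul_pos hm hn), ?_, ?_⟩
    · rw [← hp.map_mod_nat, (hcrt a b).1, mod_eq_of_lt hab.1.1]; exact hab.1.2
    · rw [← hq.map_mod_nat, (hcrt a b).2, mod_eq_of_lt hab.2.1]; exact hab.2.2
  · intro k hk
    simp only [coe_filter, mem_range, Set.mem_ofPred_eq] at hk
    have : crt (k % m) (k % n) ≡ k [MOD m * n] :=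
      (modEq_and_modEq_iff_modEq_mul hmn).mp ⟨by simp [ModEq, hcrt], by simp [ModEq, hcrt]⟩
    rwa [ModEq, mod_mod, mod_eq_of_lt hk.1] at this
  · rintro ⟨a, b⟩ hab
    simp only [coe_product, coe_filter, Set.mem_prod, mem_range, Set.mem_ofPred_eq] at hab
    simp [hcrt, mod_eq_of_lt hab.1.1, mod_eq_of_lt hab.2.1]

theorem exists_prime_sq_dvd_of_not_squarefree {n : ℕ} (h : ¬ Squarefree n) :
    ∃ p, p.Prime ∧ p ^ 2 ∣ n := by
  simpa [squarefree_iff_prime_squarefree, sq] using h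


theorem card_filter_dvd_or_dvd_succ_le (x d : ℕ) :
    #{n ∈ Icc 1 x | d ∣ n ∨ d ∣ n + 1} ≤ 2 * ((x + 1) / d) := by
  have hshift (s : ℕ) (hs : s ≤ 1) : #{n ∈ Icc 1 x | d ∣ n + s} ≤ (x + 1) / d := by
    rw [← Ioc_filter_dvd_card_eq_div]
    refine card_le_card_of_injOn (· + s) (fun n hn => ?_) (fun a _ b _ h => by simpa using h)
    simp only [coe_filter, mem_Icc, mem_Ioc, Set.mem_ofPred_eq] at hn ⊢
    exact ⟨⟨by omega, by omega⟩, hn.2⟩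
  rw [filter_or, two_mul]
  exact (card_union_le _ _).trans (add_le_add (hshift 0 zero_le_one) (hshift 1 le_rfl))


end Nat

def SquarefreePairOn (P : Finset ℕ) (n : ℕ) : Prop := ∀ p ∈ P, ¬ p ^ 2 ∣ n ∧ ¬ p ^ 2 ∣ n + 1

theorem periodic_not_dvd_and_not_dvd_succ {d M : ℕ} (hdM : d ∣ M) :
    Periodic (fun n => ¬ d ∣ n ∧ ¬ d ∣ n + 1) M := fun n => by
  simp only [add_right_comm n M 1, Nat.dvd_add_left hdM]

theorem periodic_squarefreePairOn (P : Finset ℕ) :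
    Periodic (SquarefreePairOn P) (∏ p ∈ P, p ^ 2) := fun n => by
  simp only [SquarefreePairOn]
  exact propext <| forall₂_congr fun p hp =>
    eq_iff_iff.mp (periodic_not_dvd_and_not_dvd_succ (dvd_prod_of_mem _ hp) n)

theorem count_not_dvd_and_not_dvd_succ {m : ℕ} (hm : 2 ≤ m) :
    Nat.count (fun k => ¬ m ∣ k ∧ ¬ m ∣ k + 1) m = m - 2 := by
  have : {k ∈ range m | ¬ m ∣ k ∧ ¬ m ∣ k + 1} = Ioo 0 (m - 1) := by
    ext k
    simp only [mem_filter, mem_range, mem_Ioo]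
    constructor
    · rintro ⟨hk, hk0, hk1⟩
      refine ⟨Nat.pos_of_ne_zero (by rintro rfl; exact hk0 (dvd_zero m)), ?_⟩
      by_contra! h
      exact hk1 (by rw [show k + 1 = m by omega])
    · rintro ⟨hk0, hk1⟩
      exact ⟨by omega, fun h => by have := Nat.le_of_dvd hk0 h; omega,
        fun h => by have := Nat.le_of_dvd (by omega) h; omega⟩
  rw [Nat.count_eq_card_filter_range, this, Nat.card_Ioo]
  omega

theorem count_squarefreePairOn {P : Finset ℕ} (hP : ∀ p ∈ P, p.Prime) :
    Nat.count (SquarefreePairOn P) (∏ p ∈ P, p ^ 2) = ∏ p ∈ P, (p ^ 2 - 2) := by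
  induction P using Finset.induction_on with
  | empty => simp [SquarefreePairOn, Nat.count_one]
  | @insert p P hpP ih =>
    rw [forall_mem_insert] at hP
    have hcop : (p ^ 2).Coprime (∏ q ∈ P, q ^ 2) :=
      Nat.Coprime.prod_right fun q hq => Nat.Coprime.pow 2 2 <|
        (Nat.coprime_primes hP.1 (hP.2 q hq)).mpr fun h => hpP (h ▸ hq)
    rw [prod_insert hpP, prod_insert hpP, ← ih hP.2,
      ← count_not_dvd_and_not_dvd_succ (by nlinarith [hP.1.two_le] : 2 ≤ p ^ 2),
      ← Nat.count_and_mul_of_coprime hcop (periodic_not_dvd_and_not_dvd_succ dvd_rfl)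
        (periodic_squarefreePairOn P)]
    congr 1
    funext n
    simp only [SquarefreePairOn, forall_mem_insert]

theorem tendsto_card_filter_squarefreePairOn_div {P : Finset ℕ} (hP : ∀ p ∈ P, p.Prime) :
    Tendsto (fun x : ℕ => (#{n ∈ Icc 1 x | SquarefreePairOn P n} : ℝ) / x) atTop
      (𝓝 (∏ p ∈ P, (1 - 2 / (p : ℝ) ^ 2))) := by
  have hM : 0 < ∏ p ∈ P, p ^ 2 := prod_pos fun p hp => pow_pos (hP p hp).pos 2
  convert Nat.tendsto_card_filter_Icc_div_of_periodic (periodic_squarefreePairOn P) hM using 2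
  rw [count_squarefreePairOn hP, Nat.cast_prod, Nat.cast_prod, ← prod_div_distrib]
  refine prod_congr rfl fun p hp => ?_
  have hp2 : 2 ≤ p ^ 2 := by nlinarith [(hP p hp).two_le]
  have hp0 : (p : ℝ) ≠ 0 := by exact_mod_cast (hP p hp).ne_zero
  push_cast [Nat.cast_sub hp2]
  field_simp

theorem squarefreePairOn_of_squarefree {P : Finset ℕ} (hP : ∀ p ∈ P, p.Prime) {n : ℕ}
    (hn : Squarefree n) (hn1 : Squarefree (n + 1)) : SquarefreePairOn P n := fun p hp =>
  have hp1 : ¬ IsUnit p := Nat.isUnit_iff.not.mpr (hP p hp).one_lt.ne'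
  ⟨fun h => hp1 (hn p (sq p ▸ h)), fun h => hp1 (hn1 p (sq p ▸ h))⟩

theorem filter_squarefreePairOn_primesLE_subset (y x : ℕ) :
    {n ∈ Icc 1 x | SquarefreePairOn (Nat.primesLE y) n} ⊆
      {n ∈ Icc 1 x | Squarefree n ∧ Squarefree (n + 1)} ∪
        (Ioo y (x + 2)).biUnion fun d => {n ∈ Icc 1 x | d ^ 2 ∣ n ∨ d ^ 2 ∣ n + 1} := by
  intro n hn
  rw [mem_filter, mem_Icc] at hn
  obtain ⟨⟨hn1, hnx⟩, hsieve⟩ := hn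
  by_cases hsf : Squarefree n ∧ Squarefree (n + 1)
  · exact mem_union_left _ (mem_filter.mpr ⟨mem_Icc.mpr ⟨hn1, hnx⟩, hsf⟩)
  obtain ⟨p, hp, hdvd⟩ : ∃ p, p.Prime ∧ (p ^ 2 ∣ n ∨ p ^ 2 ∣ n + 1) := by
    rcases not_and_or.mp hsf with h | h
    · obtain ⟨p, hp, hd⟩ := Nat.exists_prime_sq_dvd_of_not_squarefree h
      exact ⟨p, hp, .inl hd⟩
    · obtain ⟨p, hp, hd⟩ := Nat.exists_prime_sq_dvd_of_not_squarefree h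
      exact ⟨p, hp, .inr hd⟩
  have hpy : y < p := by
    by_contra! hpy
    have := hsieve p (Nat.mem_primesLE.mpr ⟨hpy, hp⟩)
    tauto
  have hpx : p ^ 2 ≤ n + 1 := by
    rcases hdvd with h | h
    · exact (Nat.le_of_dvd (by omega) h).trans n.le_succ
    · exact Nat.le_of_dvd n.succ_pos h
  refine mem_union_right _ (mem_biUnion.mpr ⟨p, mem_Ioo.mpr ⟨hpy, ?_⟩, ?_⟩)
  · nlinarith [hp.two_le]
  · exact mem_filter.mpr ⟨mem_Icc.mpr ⟨hn1, hnx⟩, hdvd⟩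

theorem card_filter_squarefreePairOn_primesLE_le (y x : ℕ) :
    (#{n ∈ Icc 1 x | SquarefreePairOn (Nat.primesLE y) n} : ℝ) ≤
      #{n ∈ Icc 1 x | Squarefree n ∧ Squarefree (n + 1)} + 4 * (x + 1) / (y + 1) := by
  calc (#{n ∈ Icc 1 x | SquarefreePairOn (Nat.primesLE y) n} : ℝ)
      ≤ #{n ∈ Icc 1 x | Squarefree n ∧ Squarefree (n + 1)} +
          ∑ d ∈ Ioo y (x + 2), (#{n ∈ Icc 1 x | d ^ 2 ∣ n ∨ d ^ 2 ∣ n + 1} : ℝ) := by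
        exact_mod_cast (card_le_card (filter_squarefreePairOn_primesLE_subset y x)).trans <|
          (card_union_le _ _).trans (add_le_add_right card_biUnion_le _)
    _ ≤ #{n ∈ Icc 1 x | Squarefree n ∧ Squarefree (n + 1)} +
          ∑ d ∈ Ioo y (x + 2), 2 * ((x : ℝ) + 1) * ((d : ℝ) ^ 2)⁻¹ := by
        gcongr with d
        calc (#{n ∈ Icc 1 x | d ^ 2 ∣ n ∨ d ^ 2 ∣ n + 1} : ℝ)
            ≤ (2 * ((x + 1) / d ^ 2) : ℕ) := by
              exact_mod_cast Nat.card_filter_dvd_or_dvd_succ_le x _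
          _ ≤ 2 * ((x : ℝ) + 1) * ((d : ℝ) ^ 2)⁻¹ := by
            push_cast
            rw [mul_assoc, ← div_eq_mul_inv]
            gcongr
            exact_mod_cast Nat.cast_div_le
    _ ≤ #{n ∈ Icc 1 x | Squarefree n ∧ Squarefree (n + 1)} +
          2 * ((x : ℝ) + 1) * (2 / (y + 1)) := by
        rw [← mul_sum]
        gcongr
        exact sum_Ioo_inv_sq_le y (x + 2)
    _ = _ := by ring

theorem abs_card_squarefree_pair_div_sub_le (y : ℕ) {x : ℕ} (hx : 1 ≤ x) :
    |(#{n ∈ Icc 1 x | Squarefree n ∧ Squarefree (n + 1)} : ℝ) / x -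
      #{n ∈ Icc 1 x | SquarefreePairOn (Nat.primesLE y) n} / x| ≤ 8 / (y + 1) := by
  have hsub : (#{n ∈ Icc 1 x | Squarefree n ∧ Squarefree (n + 1)} : ℝ) ≤
      #{n ∈ Icc 1 x | SquarefreePairOn (Nat.primesLE y) n} := by
    exact_mod_cast card_le_card <| monotone_filter_right _
      fun n _ (h : Squarefree n ∧ Squarefree (n + 1)) =>
        squarefreePairOn_of_squarefree (fun p => Nat.prime_of_mem_primesLE) h.1 h.2
  have hx' : (1 : ℝ) ≤ x := by exact_mod_cast hx
  rw [← sub_div, abs_div, abs_sub_comm, abs_of_nonneg (sub_nonneg.mpr hsub), Nat.abs_cast,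
    div_le_div_iff₀ (by linarith) (by positivity)]
  have htail := card_filter_squarefreePairOn_primesLE_le y x
  rw [← sub_le_iff_le_add', le_div_iff₀ (by positivity)] at htail
  linarith

theorem tendsto_of_forall_eventually_abs_sub_le {α ι : Type*} {l : Filter α} {m : Filter ι}
    [m.NeBot]
    {f : α → ℝ} {g : ι → α → ℝ} {c δ : ι → ℝ} {L : ℝ}
    (hg : ∀ y, Tendsto (g y) l (𝓝 (c y))) (hc : Tendsto c m (𝓝 L)) (hδ : Tendsto δ m (𝓝 0))
    (hfg : ∀ y, ∀ᶠ x in l, |f x - g y x| ≤ δ y) : Tendsto f l (𝓝 L) := by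
  refine Metric.tendsto_nhds.mpr fun ε hε => ?_
  obtain ⟨y, hcy, hδy⟩ := ((Metric.tendsto_nhds.mp hc (ε / 3) (by positivity)).and
    (hδ.eventually (gt_mem_nhds (by positivity : 0 < ε / 3)))).exists
  filter_upwards [hfg y, Metric.tendsto_nhds.mp (hg y) (ε / 3) (by positivity)] with x hfx hgx
  rw [Real.dist_eq] at *
  linarith [abs_sub_le (f x) (g y x) L, abs_sub_le (g y x) (c y) L]

theorem tendsto_prod_primesLE_of_hasProd {M : Type*} [CommMonoid M] [TopologicalSpace M]
    {f : ℕ → M} {a : M} (hf : HasProd (fun p : Nat.Primes => f p) a) :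
    Tendsto (fun y => ∏ p ∈ Nat.primesLE y, f p) atTop (𝓝 a) := by
  have hN := (hasProd_subtype_iff_mulIndicator (f := f) (s := {p | p.Prime})).mp hf
  refine (hN.tendsto_prod_nat.comp (tendsto_add_atTop_nat 1)).congr fun y => ?_
  rw [Function.comp_apply, Nat.primesLE, Nat.primesBelow, prod_filter]
  exact prod_congr rfl fun i _ => by simp only [Set.mulIndicator_apply, Set.mem_ofPred_eq]

theorem multipliable_one_sub_two_div_sq :
    Multipliable fun p : Nat.Primes => 1 - 2 / ((p : ℕ) : ℝ) ^ 2 := by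
  have : Summable fun p : Nat.Primes => -2 * (1 / ((p : ℕ) : ℝ) ^ 2) :=
    ((Real.summable_one_div_nat_pow.mpr one_lt_two).subtype _).mul_left (-2)
  convert Real.multipliable_one_add_of_summable this using 2
  ring

theorem stmt5 :
    Filter.Tendsto
      (fun x : ℕ =>
        (((Finset.Icc 1 x).filter (fun n => Squarefree n ∧ Squarefree (n + 1))).card : ℝ) / x)
      Filter.atTop (nhds (∏' p : Nat.Primes, (1 - 2 / ((p : ℕ) : ℝ) ^ 2))) := by
  refine tendsto_of_forall_eventually_abs_sub_le (δ := fun y : ℕ => 8 / ((y : ℝ) + 1))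
    (fun y => tendsto_card_filter_squarefreePairOn_div fun p => Nat.prime_of_mem_primesLE (n := y))
    (tendsto_prod_primesLE_of_hasProd multipliable_one_sub_two_div_sq.hasProd)
    (by simpa [div_eq_mul_inv] using tendsto_one_div_add_atTop_nhds_zero_nat.const_mul (8 : ℝ))
    fun y => ?_
  filter_upwards [eventually_ge_atTop 1] with x hx
  exact abs_card_squarefree_pair_div_sub_le y hx
end

section
/- There exists a constant c > 0 such that for all sufficiently large X, the number of integers n in [W, 2W) (where W = ∏_{p ≤ 20X} p) having more than (log X)² distinct prime factors in the interval [(log X)^5, 20X] is at most W / X^{100}. -/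
open scoped Classical

/-- The primorial of `20 X`: the product of all primes `p ≤ 20 X`. -/
def W20 (X : ℕ) : ℕ := ∏ p ∈ (Finset.range (20 * X + 1)).filter Nat.Prime, p

/-!
An exponential-moment (Chernoff) bound. Let `P` be the primes `p ≤ 20 X` and `ω(n)` the number
of them dividing `n`. Expanding `e ^ ω(n) = ∑_{S ⊆ P, ∏ S ∣ n} (e - 1) ^ |S|` and counting the
multiples of `∏ S` in `[W, 2W)` gives
`∑_{W ≤ n < 2W} e ^ ω(n) ≤ 2W ∏_{p ∈ P} (1 + (e - 1)/p) ≤ 2W exp((e - 1)(1 + log 20X))`,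
which is `W X ^ O(1)`, while every counted `n` contributes at least `exp((log X)²)`.
-/

open Finset Real

/- Filtering by a real condition on `p` makes Lean coerce `n.primeFactors` to a `Finset ℝ`
through the `Finset` monad, as in the statement below. -/
theorem Finset.card_filter_bind_pure_natCast (s : Finset ℕ) (q : ℝ → Prop) [DecidablePred q] :
    #{x ∈ s >>= fun a => pure (a : ℝ) | q x} = #(s.filter fun p : ℕ => q p) := by
  rw [bind_pure_comp, fmap_def, filter_image, card_image_of_injective _ Nat.cast_injective]

theorem card_filter_primeFactors_le (n N : ℕ) {y z : ℝ} (hz : z ≤ N) :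
    #{x ∈ n.primeFactors >>= fun a => pure (a : ℝ) | y ≤ x ∧ x ≤ z}
      ≤ #{p ∈ Nat.primesBelow (N + 1) | p ∣ n} := by
  refine (card_filter_bind_pure_natCast _ _).trans_le (card_le_card ?_)
  intro p hp
  simp only [mem_filter, Nat.mem_primeFactors, Nat.mem_primesBelow] at hp ⊢
  have hpN : p ≤ N := by exact_mod_cast hp.2.2.trans hz
  exact ⟨⟨by omega, hp.1.1⟩, hp.1.2.1⟩

theorem card_filter_dvd_Ico_le {a : ℕ} (ha : 1 ≤ a) (b m : ℕ) :
    (#{n ∈ Ico a b | m ∣ n} : ℝ) ≤ b / m := by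
  have hsub : {n ∈ Ico a b | m ∣ n} ⊆ {n ∈ Ioc 0 b | m ∣ n} :=
    filter_subset_filter _ fun n hn => by simp only [mem_Ico, mem_Ioc] at hn ⊢; omega
  calc (#{n ∈ Ico a b | m ∣ n} : ℝ) ≤ ((b / m : ℕ) : ℝ) := by
        rw [← Nat.Ioc_filter_dvd_card_eq_div]; exact_mod_cast card_le_card hsub
    _ ≤ b / m := Nat.cast_div_le

section PrimeDivisorCount

variable {P : Finset ℕ} (hP : ∀ p ∈ P, p.Prime) {a : ℕ} (ha : 1 ≤ a) (b : ℕ)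
include hP ha

theorem card_filter_subset_filter_dvd_le (S : Finset ℕ) :
    (#{n ∈ Ico a b | S ⊆ {p ∈ P | p ∣ n}} : ℝ) ≤ b / ∏ p ∈ S, (p : ℝ) := by
  have hsub : {n ∈ Ico a b | S ⊆ {p ∈ P | p ∣ n}} ⊆ {n ∈ Ico a b | (∏ p ∈ S, p) ∣ n} := by
    refine monotone_filter_right _ fun n _ hS => prod_primes_dvd n (fun p hp => ?_) fun p hp => ?_
    · exact (hP p (mem_filter.1 (hS hp)).1).prime
    · exact (mem_filter.1 (hS hp)).2
  calc (#{n ∈ Ico a b | S ⊆ {p ∈ P | p ∣ n}} : ℝ) ≤ #{n ∈ Ico a b | (∏ p ∈ S, p) ∣ n} := by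
        exact_mod_cast card_le_card hsub
    _ ≤ b / ∏ p ∈ S, (p : ℝ) := by
        have := card_filter_dvd_Ico_le ha b (∏ p ∈ S, p)
        push_cast at this
        exact this

theorem sum_one_add_pow_card_filter_dvd_le {t : ℝ} (ht : 0 ≤ t) :
    ∑ n ∈ Ico a b, (1 + t) ^ #{p ∈ P | p ∣ n} ≤ b * ∏ p ∈ P, (1 + t / p) := by
  calc ∑ n ∈ Ico a b, (1 + t) ^ #{p ∈ P | p ∣ n}
      = ∑ n ∈ Ico a b, ∑ S ∈ {p ∈ P | p ∣ n}.powerset, t ^ #S := by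
        refine sum_congr rfl fun n _ => ?_
        rw [add_comm, ← sum_pow_mul_eq_add_pow]
        simp only [one_pow, mul_one]
    _ = ∑ S ∈ P.powerset, ∑ n ∈ Ico a b with S ⊆ {p ∈ P | p ∣ n}, t ^ #S := by
        refine sum_comm' fun n S => ?_
        simp only [mem_powerset, mem_filter]
        exact ⟨fun ⟨hn, hS⟩ => ⟨⟨hn, hS⟩, hS.trans (filter_subset _ _)⟩, fun h => h.1⟩
    _ ≤ ∑ S ∈ P.powerset, b / (∏ p ∈ S, (p : ℝ)) * t ^ #S := by
        refine sum_le_sum fun S _ => ?_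
        rw [sum_const, nsmul_eq_mul]
        gcongr
        exact card_filter_subset_filter_dvd_le hP ha b S
    _ = b * ∏ p ∈ P, (1 + t / p) := by
        rw [prod_one_add, mul_sum]
        refine sum_congr rfl fun S _ => ?_
        rw [prod_div_distrib, prod_const]
        ring

theorem card_filter_lt_card_filter_dvd_le {l : ℝ} (hl : 0 ≤ l) (k : ℝ) :
    (#{n ∈ Ico a b | k < #{p ∈ P | p ∣ n}} : ℝ)
      ≤ b * exp ((exp l - 1) * ∑ p ∈ P, (p : ℝ)⁻¹ - l * k) := by
  have ht : 0 ≤ exp l - 1 := by linarith [one_le_exp hl]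
  rw [exp_sub, ← mul_div_assoc, le_div_iff₀ (exp_pos _)]
  calc (#{n ∈ Ico a b | k < #{p ∈ P | p ∣ n}} : ℝ) * exp (l * k)
      ≤ ∑ n ∈ Ico a b with k < #{p ∈ P | p ∣ n}, exp (l * #{p ∈ P | p ∣ n}) := by
        rw [← nsmul_eq_mul]
        exact card_nsmul_le_sum _ _ _ fun n hn =>
          exp_le_exp.2 (mul_le_mul_of_nonneg_left (mem_filter.1 hn).2.le hl)
    _ ≤ ∑ n ∈ Ico a b, (1 + (exp l - 1)) ^ #{p ∈ P | p ∣ n} := by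
        simp only [add_sub_cancel, ← exp_nat_mul, mul_comm l]
        exact sum_le_sum_of_subset_of_nonneg (filter_subset _ _) fun _ _ _ => (exp_pos _).le
    _ ≤ b * ∏ p ∈ P, (1 + (exp l - 1) / p) := sum_one_add_pow_card_filter_dvd_le hP ha b ht
    _ ≤ b * exp ((exp l - 1) * ∑ p ∈ P, (p : ℝ)⁻¹) := by
        rw [mul_sum, exp_sum]
        gcongr with p hp
        rw [add_comm, ← div_eq_mul_inv]
        exact add_one_le_exp _

end PrimeDivisorCount

theorem sum_inv_primes_le_one_add_log (N : ℕ) :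
    ∑ p ∈ Nat.primesBelow (N + 1), (p : ℝ)⁻¹ ≤ 1 + log N := by
  calc ∑ p ∈ Nat.primesBelow (N + 1), (p : ℝ)⁻¹ ≤ ∑ d ∈ Icc 1 N, (d : ℝ)⁻¹ := by
        refine sum_le_sum_of_subset_of_nonneg (fun p hp => ?_) fun _ _ _ => by positivity
        rw [Nat.mem_primesBelow] at hp
        rw [mem_Icc]
        exact ⟨hp.2.one_lt.le, by omega⟩
    _ ≤ 1 + log N := by
        have h := harmonic_le_one_add_log N
        rw [harmonic_eq_sum_Icc] at h
        push_cast at h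
        exact h


theorem two_mul_mul_exp_le_div_pow {x : ℝ} (hx : 0 < x) (hL : 105 ≤ log x) {w : ℝ} (hw : 0 ≤ w) :
    2 * w * exp ((exp 1 - 1) * (1 + 2 * log x) - log x ^ 2) ≤ w / x ^ 100 := by
  have he : exp 1 - 1 ≤ 2 := by linarith [exp_one_lt_d9]
  have hx100 : x ^ 100 = exp (100 * log x) := by
    rw [← rpow_natCast, rpow_def_of_pos hx]
    norm_num [mul_comm]
  have h2 : (2 : ℝ) ≤ exp 1 := by linarith [add_one_le_exp (1 : ℝ)]
  rw [hx100, div_eq_mul_inv, ← exp_neg]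
  calc 2 * w * exp ((exp 1 - 1) * (1 + 2 * log x) - log x ^ 2)
      ≤ w * (exp 1 * exp ((exp 1 - 1) * (1 + 2 * log x) - log x ^ 2)) := by
        rw [mul_comm 2 w, mul_assoc]
        gcongr
    _ = w * exp (1 + (exp 1 - 1) * (1 + 2 * log x) - log x ^ 2) := by
        rw [← exp_add, add_sub_assoc]
    _ ≤ w * exp (-(100 * log x)) := by
        gcongr
        nlinarith

theorem stmt10 :
    ∃ c : ℝ, 0 < c ∧ ∀ᶠ X : ℕ in Filter.atTop,
      (((Finset.Ico (W20 X) (2 * W20 X)).filter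
          (fun n => (Real.log X) ^ 2 <
            ((n.primeFactors.filter
              (fun p => (Real.log X) ^ 5 ≤ (p : ℝ) ∧ (p : ℝ) ≤ 20 * X)).card : ℝ))).card : ℝ)
        ≤ (W20 X : ℝ) / (X : ℝ) ^ 100 := by
  refine ⟨1, one_pos, ?_⟩
  have hlog := tendsto_log_atTop.comp tendsto_natCast_atTop_atTop
  filter_upwards [hlog.eventually_ge_atTop 105, Filter.eventually_ge_atTop 20] with X hL hX
  set P := Nat.primesBelow (20 * X + 1)
  have hW : 1 ≤ W20 X := one_le_prod' fun p hp => (mem_filter.1 hp).2.one_lt.le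
  have hlog20 : log (20 * X) ≤ 2 * log X := by
    rw [log_mul (by norm_num) (by positivity), two_mul]
    gcongr
    exact_mod_cast hX
  calc _ ≤ (#{n ∈ Ico (W20 X) (2 * W20 X) | log X ^ 2 < #{p ∈ P | p ∣ n}} : ℝ) := by
        refine Nat.cast_le.2 (card_le_card (monotone_filter_right _ fun n _ hn => hn.trans_le ?_))
        exact_mod_cast card_filter_primeFactors_le n (20 * X) (by push_cast; rfl)
    _ ≤ ↑(2 * W20 X) * exp ((exp 1 - 1) * ∑ p ∈ P, (p : ℝ)⁻¹ - 1 * log X ^ 2) :=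
        card_filter_lt_card_filter_dvd_le (fun p hp => (Nat.mem_primesBelow.1 hp).2) hW _
          zero_le_one _
    _ ≤ 2 * W20 X * exp ((exp 1 - 1) * (1 + 2 * log X) - log X ^ 2) := by
        push_cast
        rw [one_mul]
        gcongr
        · linarith [add_one_le_exp 1]
        · refine (sum_inv_primes_le_one_add_log (20 * X)).trans ?_
          push_cast
          linarith
    _ ≤ W20 X / (X : ℝ) ^ 100 := two_mul_mul_exp_le_div_pow (by positivity) hL (by positivity)
end
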